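/- arXiv:2009.03222 — 10 statements merged into one kernel-verified Lean document; each statement's English description precedes it below -/
import Mathlib

section
/- Let A and B be algebras over ℚ (or a field of characteristic zero), n ≥ 2, and h : A → B a linear map such that h(aⁿ) = h(a)ⁿ for all a ∈ A. Then for all x₁, …, xₙ ∈ A, the sum over all permutations σ of {1,…,n} of (h(x_{σ(1)}⋯x_{σ(n)}) − h(x_{σ(1)})⋯h(x_{σ(n)})) equals 0. -/
open Finset

lemma coef_lemma (n : ℕ) (f : Fin n → Fin n) :
    (∑ S : Finset (Fin n), if ∀ i, f i ∈ S then (-1:ℤ)^(n - S.card) else 0)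
      = if Function.Surjective f then 1 else 0 := by
  classical
  have hcomp : ∀ S : Finset (Fin n),
      (if ∀ i, f i ∈ Sᶜ then (-1:ℤ)^(n - Sᶜ.card) else 0)
        = if S ⊆ (Finset.image f univ)ᶜ then (-1:ℤ)^(S.card) else 0 := by
    intro S
    have hcond : (∀ i, f i ∈ Sᶜ) ↔ S ⊆ (Finset.image f univ)ᶜ := by
      constructor
      · intro hS a ha
        simp only [Finset.mem_compl, Finset.mem_image] at *
        rintro ⟨i, -, rfl⟩
        exact hS i ha
      · intro hS i
        simp only [Finset.mem_compl]
        intro hi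
        have := hS hi
        simp only [Finset.mem_compl, Finset.mem_image] at this
        exact this ⟨i, Finset.mem_univ i, rfl⟩
    have hcard : S.card ≤ n := by
      simpa using Finset.card_le_card (Finset.subset_univ S)
    have hexp : n - Sᶜ.card = S.card := by
      rw [Finset.card_compl]
      simp only [Fintype.card_fin]
      omega
    simp only [hexp, hcond]
  calc (∑ S : Finset (Fin n), if ∀ i, f i ∈ S then (-1:ℤ)^(n - S.card) else 0)
      = ∑ S : Finset (Fin n), if ∀ i, f i ∈ Sᶜ then (-1:ℤ)^(n - Sᶜ.card) else 0 := by
        exact (Equiv.sum_comp (Function.Involutive.toPerm _ compl_compl) _).symm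
    _ = ∑ S : Finset (Fin n), if S ⊆ (Finset.image f univ)ᶜ then (-1:ℤ)^(S.card) else 0 :=
        Finset.sum_congr rfl fun S _ => hcomp S
    _ = ∑ S ∈ ((Finset.image f univ)ᶜ).powerset, (-1:ℤ)^(S.card) := by
        rw [← Finset.sum_filter]
        apply Finset.sum_congr _ (fun _ _ => rfl)
        ext S; simp
    _ = if Function.Surjective f then 1 else 0 := by
        rw [Finset.sum_powerset_neg_one_pow_card]
        have hiff : Finset.image f univ = univ ↔ Function.Surjective f := by
          constructor
          · intro hu b
            have : b ∈ Finset.image f univ := by rw [hu]; exact Finset.mem_univ b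
            simpa using this
          · intro hs
            ext b; simpa using hs b
        simp only [Finset.compl_eq_empty_iff, hiff]

/-- Noncommutative polarization identity. -/
lemma polarization {R : Type*} [Ring R] (n : ℕ) (x : Fin n → R) :
    ∑ σ : Equiv.Perm (Fin n), (List.ofFn fun i => x (σ i)).prod
      = ∑ S : Finset (Fin n), (-1:ℤ)^(n - S.card) • (∑ i ∈ S, x i)^n := by
  classical
  have expand : ∀ S : Finset (Fin n),
      (∑ i ∈ S, x i)^n = ∑ f ∈ Fintype.piFinset (fun _ : Fin n => S),
        (List.ofFn fun j => x (f j)).prod := by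
    intro S
    rw [← MultilinearMap.mkPiAlgebraFin_apply_const (R := ℤ)]
    rw [MultilinearMap.map_sum_finset]
    simp
  have pifil : ∀ S : Finset (Fin n), Fintype.piFinset (fun _ : Fin n => S)
      = Finset.univ.filter (fun f : Fin n → Fin n => ∀ i, f i ∈ S) := by
    intro S; ext f; simp
  calc ∑ σ : Equiv.Perm (Fin n), (List.ofFn fun i => x (σ i)).prod
      = ∑ f ∈ Finset.univ.filter (fun f : Fin n → Fin n => Function.Surjective f),
          (List.ofFn fun j => x (f j)).prod := by
        refine Finset.sum_bij (fun σ _ => (σ : Fin n → Fin n)) ?_ ?_ ?_ ?_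
        · intro σ _; simp [σ.surjective]
        · intro σ₁ _ σ₂ _ hh
          exact Equiv.coe_fn_injective hh
        · intro f hf
          have hsurj : Function.Surjective f := by
            simpa using (Finset.mem_filter.mp hf).2
          have hbij : Function.Bijective f := Finite.surjective_iff_bijective.mp hsurj
          exact ⟨Equiv.ofBijective f hbij, Finset.mem_univ _, rfl⟩
        · intro σ _; rfl
    _ = ∑ f : Fin n → Fin n,
          (if Function.Surjective f then (1:ℤ) else 0) • (List.ofFn fun j => x (f j)).prod := by
        rw [Finset.sum_filter]
        refine Finset.sum_congr rfl fun f _ => ?_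
        split <;> simp
    _ = ∑ f : Fin n → Fin n,
          (∑ S : Finset (Fin n), if ∀ i, f i ∈ S then (-1:ℤ)^(n - S.card) else 0) •
            (List.ofFn fun j => x (f j)).prod :=
        Finset.sum_congr rfl fun f _ => by rw [coef_lemma]
    _ = ∑ f : Fin n → Fin n, ∑ S : Finset (Fin n),
          (if ∀ i, f i ∈ S then (-1:ℤ)^(n - S.card) • (List.ofFn fun j => x (f j)).prod
            else 0) := by
        refine Finset.sum_congr rfl fun f _ => ?_
        rw [Finset.sum_smul]
        refine Finset.sum_congr rfl fun S _ => ?_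
        split <;> simp
    _ = ∑ S : Finset (Fin n), ∑ f : Fin n → Fin n,
          (if ∀ i, f i ∈ S then (-1:ℤ)^(n - S.card) • (List.ofFn fun j => x (f j)).prod
            else 0) := Finset.sum_comm
    _ = ∑ S : Finset (Fin n), (-1:ℤ)^(n - S.card) • (∑ i ∈ S, x i)^n := by
        refine Finset.sum_congr rfl fun S _ => ?_
        rw [← Finset.sum_filter, ← pifil, expand S, Finset.smul_sum]

theorem stmt_2 {A B : Type*} [Ring A] [Ring B] [Algebra ℚ A] [Algebra ℚ B]
    (n : ℕ) (hn : 2 ≤ n) (h : A →ₗ[ℚ] B) (hJ : ∀ a : A, h (a ^ n) = (h a) ^ n) :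
    ∀ x : Fin n → A,
      ∑ σ : Equiv.Perm (Fin n),
        (h ((List.ofFn fun i => x (σ i)).prod) - (List.ofFn fun i => h (x (σ i))).prod) = 0 := by
  intro x
  rw [Finset.sum_sub_distrib]
  rw [sub_eq_zero]
  calc ∑ σ : Equiv.Perm (Fin n), h ((List.ofFn fun i => x (σ i)).prod)
      = h (∑ σ : Equiv.Perm (Fin n), (List.ofFn fun i => x (σ i)).prod) := (map_sum h _ _).symm
    _ = h (∑ S : Finset (Fin n), (-1:ℤ)^(n - S.card) • (∑ i ∈ S, x i)^n) := by
        rw [polarization]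
    _ = ∑ S : Finset (Fin n), (-1:ℤ)^(n - S.card) • (∑ i ∈ S, h (x i))^n := by
        rw [map_sum]
        refine Finset.sum_congr rfl fun S _ => ?_
        rw [map_zsmul, hJ, map_sum]
    _ = ∑ σ : Equiv.Perm (Fin n), (List.ofFn fun i => h (x (σ i))).prod :=
        (polarization n (fun i => h (x i))).symm
end

section
/- Let A and B be commutative algebras over a field of characteristic zero, n ≥ 2 an integer, and h : A → B a linear map with h(aⁿ) = h(a)ⁿ for all a ∈ A. Then h(x₁x₂⋯xₙ) = h(x₁)h(x₂)⋯h(xₙ) for all x₁, …, xₙ ∈ A; that is, every n-Jordan homomorphism between commutative algebras is an n-homomorphism. -/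
open Finset

/-- The alternating-sum coefficient over supersets of `T`. -/
lemma polar_coeff {n : ℕ} (T : Finset (Fin n)) :
    ∑ S ∈ (univ : Finset (Fin n)).powerset,
      (if T ⊆ S then (-1 : ℤ) ^ (n - S.card) else 0)
    = if T = univ then 1 else 0 := by
  classical
  rw [← Finset.sum_filter]
  have hbij : ∑ S ∈ (univ : Finset (Fin n)).powerset.filter (fun S => T ⊆ S),
      (-1 : ℤ) ^ (n - S.card)
      = ∑ U ∈ Tᶜ.powerset, (-1 : ℤ) ^ (n - (T ∪ U).card) := by
    refine Finset.sum_nbij' (fun S => S \ T) (fun U => T ∪ U) ?_ ?_ ?_ ?_ ?_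
    · intro S hS
      simp only [mem_filter, mem_powerset] at hS
      simp only [mem_powerset]
      intro a ha
      simp only [mem_sdiff] at ha
      exact Finset.mem_compl.mpr ha.2
    · intro U hU
      simp only [mem_powerset] at hU
      simp only [mem_filter, mem_powerset]
      exact ⟨subset_univ _, subset_union_left⟩
    · intro S hS
      simp only [mem_filter, mem_powerset] at hS
      exact Finset.union_sdiff_of_subset hS.2
    · intro U hU
      simp only [mem_powerset] at hU
      exact Finset.union_sdiff_cancel_left
        (Finset.disjoint_left.mpr fun a ha hU' => (Finset.mem_compl.mp (hU hU')) ha)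
    · intro S hS
      simp only [mem_filter, mem_powerset] at hS
      rw [Finset.union_sdiff_of_subset hS.2]
  rw [hbij]
  have hcard : ∀ U ∈ Tᶜ.powerset, n - (T ∪ U).card = Tᶜ.card - U.card := by
    intro U hU
    simp only [mem_powerset] at hU
    have hdisj : Disjoint T U :=
      Finset.disjoint_left.mpr fun a ha hU' => (Finset.mem_compl.mp (hU hU')) ha
    rw [Finset.card_union_of_disjoint hdisj, Finset.card_compl]
    have h1 : T.card + U.card ≤ n := by
      have := Finset.card_le_card (Finset.union_subset (subset_univ T) (subset_univ U))
      rwa [Finset.card_union_of_disjoint hdisj, Finset.card_univ, Fintype.card_fin] at this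
    simp only [Fintype.card_fin]
    omega
  rw [Finset.sum_congr rfl fun U hU => by rw [hcard U hU]]
  have hpow : ∀ U ∈ Tᶜ.powerset, (-1 : ℤ) ^ (Tᶜ.card - U.card)
      = (-1 : ℤ) ^ Tᶜ.card * (-1 : ℤ) ^ U.card := by
    intro U hU
    simp only [mem_powerset] at hU
    have hle : U.card ≤ Tᶜ.card := Finset.card_le_card hU
    have : Tᶜ.card - U.card + 2 * U.card = Tᶜ.card + U.card := by omega
    calc (-1 : ℤ) ^ (Tᶜ.card - U.card)
        = (-1 : ℤ) ^ (Tᶜ.card - U.card) * ((-1 : ℤ) ^ 2) ^ U.card := by norm_num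
      _ = (-1 : ℤ) ^ (Tᶜ.card - U.card + 2 * U.card) := by
          rw [← pow_mul, ← pow_add]
      _ = (-1 : ℤ) ^ (Tᶜ.card + U.card) := by rw [this]
      _ = (-1 : ℤ) ^ Tᶜ.card * (-1 : ℤ) ^ U.card := by rw [pow_add]
  rw [Finset.sum_congr rfl hpow, ← Finset.mul_sum, Finset.sum_powerset_neg_one_pow_card]
  by_cases hT : T = univ
  · simp [hT]
  · have : Tᶜ ≠ ∅ := by
      intro hc
      exact hT (by simpa [Finset.compl_eq_empty_iff] using hc)
    simp [hT, this]

/-- Polarization identity in a commutative ring. -/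
lemma polar_identity {R : Type*} [CommRing R] (n : ℕ) (x : Fin n → R) :
    ∑ S ∈ (univ : Finset (Fin n)).powerset,
      (-1 : ℤ) ^ (n - S.card) • (∑ i ∈ S, x i) ^ n
    = n.factorial • ∏ i, x i := by
  classical
  set g : (Fin n → ℕ) → R :=
    fun k => (Nat.multinomial univ k : R) * ∏ i, x i ^ k i with hg
  have hexp : ∀ S ∈ (univ : Finset (Fin n)).powerset,
      (-1 : ℤ) ^ (n - S.card) • (∑ i ∈ S, x i) ^ n
      = ∑ k ∈ Finset.piAntidiag (univ : Finset (Fin n)) n,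
          (if (univ.filter fun i => k i ≠ 0) ⊆ S then (-1 : ℤ) ^ (n - S.card) else 0) • g k := by
    intro S _
    rw [Finset.sum_pow_eq_sum_piAntidiag, Finset.smul_sum]
    have hset : Finset.piAntidiag S n
        = (Finset.piAntidiag (univ : Finset (Fin n)) n).filter
            (fun k => ∀ i, k i ≠ 0 → i ∈ S) := by
      ext k
      simp only [Finset.mem_piAntidiag, Finset.mem_filter, Finset.mem_univ, implies_true,
        and_true]
      constructor
      · rintro ⟨hsum, hsupp⟩
        exact ⟨((Finset.sum_subset (subset_univ S) fun i _ hi => by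
          by_contra hne; exact hi (hsupp i hne)).symm).trans hsum, hsupp⟩
      · rintro ⟨hsum, hsupp⟩
        exact ⟨(Finset.sum_subset (subset_univ S) fun i _ hi => by
          by_contra hne; exact hi (hsupp i hne)).trans hsum, hsupp⟩
    rw [hset, Finset.sum_filter]
    refine Finset.sum_congr rfl fun k hk => ?_
    simp only [Finset.mem_piAntidiag] at hk
    have hsub : (∀ i, k i ≠ 0 → i ∈ S) ↔ (univ.filter fun i => k i ≠ 0) ⊆ S := by
      simp [Finset.subset_iff]
    by_cases hc : ∀ i, k i ≠ 0 → i ∈ S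
    · rw [if_pos hc, if_pos (hsub.mp hc)]
      congr 1
      have hsupp : (univ.filter fun i => k i ≠ 0) ⊆ S := hsub.mp hc
      have hmult : Nat.multinomial S k = Nat.multinomial univ k := by
        unfold Nat.multinomial
        rw [Finset.sum_subset (subset_univ S) fun i _ hi => by
            by_contra hne; exact hi (hc i hne),
          Finset.prod_subset (subset_univ S) fun i _ hi => by
            have : k i = 0 := by by_contra hne; exact hi (hc i hne)
            rw [this]; rfl]
      have hprod : ∏ i ∈ S, x i ^ k i = ∏ i, x i ^ k i :=
        Finset.prod_subset (subset_univ S) fun i _ hi => by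
          have : k i = 0 := by by_contra hne; exact hi (hc i hne)
          rw [this, pow_zero]
      rw [hg, hmult, hprod]
    · rw [if_neg hc, if_neg (fun hs => hc (hsub.mpr hs)), zero_smul]
  rw [Finset.sum_congr rfl hexp, Finset.sum_comm]
  have hinner : ∀ k ∈ Finset.piAntidiag (univ : Finset (Fin n)) n,
      (∑ S ∈ (univ : Finset (Fin n)).powerset,
        (if (univ.filter fun i => k i ≠ 0) ⊆ S then (-1 : ℤ) ^ (n - S.card) else 0) • g k)
      = (if (univ.filter fun i => k i ≠ 0) = univ then (1 : ℤ) else 0) • g k := by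
    intro k _
    rw [← Finset.sum_smul, polar_coeff]
  rw [Finset.sum_congr rfl hinner]
  have hfilter : ∀ k ∈ Finset.piAntidiag (univ : Finset (Fin n)) n,
      ((univ.filter fun i => k i ≠ 0) = univ ↔ k = fun _ => 1) := by
    intro k hk
    simp only [Finset.mem_piAntidiag] at hk
    constructor
    · intro hfull
      have hall : ∀ i, k i ≠ 0 := by
        intro i
        have hmem : i ∈ univ.filter (fun j => k j ≠ 0) := by
          rw [hfull]; exact Finset.mem_univ i
        exact (Finset.mem_filter.mp hmem).2
      have hone : ∀ i ∈ (univ : Finset (Fin n)), 1 ≤ k i :=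
        fun i _ => Nat.one_le_iff_ne_zero.mpr (hall i)
      have hsum : ∑ i : Fin n, k i = ∑ _i : Fin n, 1 := by
        rw [hk.1]; simp
      have := (Finset.sum_eq_sum_iff_of_le hone).mp hsum.symm
      funext i
      exact ((this i (Finset.mem_univ i)).symm : k i = 1)
    · intro hk1
      subst hk1
      simp
  have hsingle : ∑ k ∈ Finset.piAntidiag (univ : Finset (Fin n)) n,
      (if (univ.filter fun i => k i ≠ 0) = univ then (1 : ℤ) else 0) • g k
      = g (fun _ => 1) := by
    rw [Finset.sum_congr rfl (fun k hk => by rw [if_congr (hfilter k hk) rfl rfl])]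
    rw [← Finset.sum_filter_add_sum_filter_not _ (fun k => k = fun _ => 1)]
    have h1 : (Finset.piAntidiag (univ : Finset (Fin n)) n).filter
        (fun k => k = fun _ => 1) = {fun _ => 1} := by
      ext k
      simp only [Finset.mem_filter, Finset.mem_singleton, Finset.mem_piAntidiag]
      constructor
      · exact fun h => h.2
      · rintro rfl
        simp
    rw [h1]
    simp
  rw [hsingle, hg]
  have hmult1 : Nat.multinomial (univ : Finset (Fin n)) (fun _ => 1) = n.factorial := by
    have := Nat.multinomial_spec (univ : Finset (Fin n)) (fun _ => 1)
    simpa using this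
  simp only [hmult1, pow_one, nsmul_eq_mul]

theorem stmt_3 {K A B : Type*} [Field K] [CharZero K]
    [CommRing A] [CommRing B] [Algebra K A] [Algebra K B]
    (n : ℕ) (hn : 2 ≤ n) (h : A →ₗ[K] B) (hJ : ∀ a : A, h (a ^ n) = (h a) ^ n) :
    ∀ x : Fin n → A, h (∏ i, x i) = ∏ i, h (x i) := by
  intro x
  have hA := polar_identity n x
  have hB := polar_identity n (fun i => h (x i))
  have key : n.factorial • h (∏ i, x i) = n.factorial • ∏ i, h (x i) := by
    rw [← map_nsmul, ← hA, map_sum, ← hB]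
    refine Finset.sum_congr rfl fun S _ => ?_
    rw [map_zsmul, hJ, map_sum]
  have hK : (n.factorial : K) • h (∏ i, x i) = (n.factorial : K) • ∏ i, h (x i) := by
    rw [Nat.cast_smul_eq_nsmul, Nat.cast_smul_eq_nsmul]
    exact key
  have hne : (n.factorial : K) ≠ 0 := by
    exact_mod_cast Nat.factorial_ne_zero n
  have := congrArg (fun b => (n.factorial : K)⁻¹ • b) hK
  simpa [inv_smul_smul₀ hne] using this
end

section
/- Let A and B be commutative algebras over a field of characteristic zero and h : A → B a linear map with h(a³) = h(a)³ for all a ∈ A. Then h(xyz) = h(x)h(y)h(z) for all x, y, z ∈ A. -/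
theorem stmt_4 {K A B : Type*} [Field K] [CharZero K]
    [CommRing A] [CommRing B] [Algebra K A] [Algebra K B]
    (h : A →ₗ[K] B) (hJ : ∀ a : A, h (a ^ 3) = (h a) ^ 3) :
    ∀ x y z : A, h (x * y * z) = h x * h y * h z := by
  intro x y z
  have key : (6 : ℕ) • (x * y * z) =
      (x + y + z) ^ 3 - (x + y) ^ 3 - (y + z) ^ 3 - (x + z) ^ 3
        + x ^ 3 + y ^ 3 + z ^ 3 := by ring
  have e : (6 : ℕ) • h (x * y * z) = (6 : ℕ) • (h x * h y * h z) := by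
    rw [← map_nsmul h, key]
    simp only [map_sub, map_add, hJ]
    ring
  rw [← Nat.cast_smul_eq_nsmul K, ← Nat.cast_smul_eq_nsmul K] at e
  exact smul_right_injective B (by norm_num : ((6 : ℕ) : K) ≠ 0) e
end

section
/- Let A and B be commutative algebras over ℚ and h : A → B a linear map with h(a⁴) = h(a)⁴ for all a ∈ A. Then h(wxyz) = h(w)h(x)h(y)h(z) for all w, x, y, z ∈ A. -/
theorem stmt_5 {A B : Type*} [CommRing A] [CommRing B] [Algebra ℚ A] [Algebra ℚ B]
    (h : A →ₗ[ℚ] B) (hJ : ∀ a : A, h (a ^ 4) = (h a) ^ 4) :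
    ∀ w x y z : A, h (w * x * y * z) = h w * h x * h y * h z := by
  intro w x y z
  have hA : (w+x+y+z)^4 + ((w+x)^4+(w+y)^4+(w+z)^4+(x+y)^4+(x+z)^4+(y+z)^4)
      = (w+x+y)^4 + (w+x+z)^4 + (w+y+z)^4 + (x+y+z)^4 + (w^4+x^4+y^4+z^4)
        + (24:ℕ) • (w*x*y*z) := by
    rw [nsmul_eq_mul]; push_cast; ring
  have hB := congrArg h hA
  simp only [map_add, map_nsmul, hJ] at hB
  simp only [nsmul_eq_mul, Nat.cast_ofNat] at hB
  have hB2 : (24:B) * h (w*x*y*z) = (24:B) * (h w * h x * h y * h z) := by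
    linear_combination -hB
  have hB3 : (24:ℚ) • h (w*x*y*z) = (24:ℚ) • (h w * h x * h y * h z) := by
    rw [show ((24:ℚ)) = ((24:ℕ):ℚ) by norm_num, Nat.cast_smul_eq_nsmul,
      Nat.cast_smul_eq_nsmul, nsmul_eq_mul, nsmul_eq_mul]
    push_cast
    exact hB2
  exact smul_right_injective B (by norm_num : (24:ℚ) ≠ 0) hB3
end

section
/- Let A and B be commutative algebras over ℚ and h : A → B a linear map with h(a⁵) = h(a)⁵ for all a ∈ A. Then h(x₁x₂x₃x₄x₅) = h(x₁)h(x₂)h(x₃)h(x₄)h(x₅) for all x₁,…,x₅ ∈ A. -/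
private lemma polar5 {R : Type*} [CommRing R] (a b c d e : R) :
    (a+b+c+d+e)^5
      - ((a+b+c+d)^5 + (a+b+c+e)^5 + (a+b+d+e)^5 + (a+c+d+e)^5 + (b+c+d+e)^5)
      + ((a+b+c)^5 + (a+b+d)^5 + (a+b+e)^5 + (a+c+d)^5 + (a+c+e)^5
        + (a+d+e)^5 + (b+c+d)^5 + (b+c+e)^5 + (b+d+e)^5 + (c+d+e)^5)
      - ((a+b)^5 + (a+c)^5 + (a+d)^5 + (a+e)^5 + (b+c)^5
        + (b+d)^5 + (b+e)^5 + (c+d)^5 + (c+e)^5 + (d+e)^5)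
      + (a^5 + b^5 + c^5 + d^5 + e^5)
      = 120 * (a * b * c * d * e) := by
  ring

private lemma smul120 {R : Type*} [CommRing R] [Algebra ℚ R] (z : R) :
    (120 : ℚ) • z = 120 * z := by
  rw [Algebra.smul_def, map_ofNat]

theorem stmt_6 {A B : Type*} [CommRing A] [CommRing B] [Algebra ℚ A] [Algebra ℚ B]
    (h : A →ₗ[ℚ] B) (hJ : ∀ a : A, h (a ^ 5) = (h a) ^ 5) :
    ∀ x₁ x₂ x₃ x₄ x₅ : A,
      h (x₁ * x₂ * x₃ * x₄ * x₅) = h x₁ * h x₂ * h x₃ * h x₄ * h x₅ := by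
  intro a b c d e
  have key : (120 : ℚ) • h (a * b * c * d * e)
      = (120 : ℚ) • (h a * h b * h c * h d * h e) := by
    rw [← map_smul, smul120, smul120, ← polar5 a b c d e, ← polar5 (h a) (h b) (h c) (h d) (h e)]
    simp only [map_add, map_sub, hJ]
  have h120 : (120 : ℚ) ≠ 0 := by norm_num
  calc h (a * b * c * d * e)
      = (120 : ℚ)⁻¹ • ((120 : ℚ) • h (a * b * c * d * e)) := (inv_smul_smul₀ h120 _).symm
    _ = (120 : ℚ)⁻¹ • ((120 : ℚ) • (h a * h b * h c * h d * h e)) := by rw [key]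
    _ = h a * h b * h c * h d * h e := inv_smul_smul₀ h120 _
end

section
/- Let A and B be commutative algebras over a field of characteristic zero and h : A → B a linear map with h(a³) = h(a)³ for all a ∈ A. Then h(x²y) = h(x)²h(y) for all x, y ∈ A. -/
theorem stmt_13 {K A B : Type*} [Field K] [CharZero K]
    [CommRing A] [CommRing B] [Algebra K A] [Algebra K B]
    (h : A →ₗ[K] B) (hJ : ∀ a : A, h (a ^ 3) = (h a) ^ 3) :
    ∀ x y : A, h (x ^ 2 * y) = (h x) ^ 2 * h y := by
  intro x y
  have e1 := hJ (x + y)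
  have e2 := hJ (x - y)
  have e3 := hJ y
  have expand : (x + y) ^ 3 - (x - y) ^ 3 = (6 : K) • (x ^ 2 * y) + (2 : K) • (y ^ 3) := by
    simp only [Algebra.smul_def, map_ofNat]
    ring
  have expandB : ((h x + h y) ^ 3) - ((h x - h y) ^ 3)
      = (6 : K) • ((h x) ^ 2 * h y) + (2 : K) • ((h y) ^ 3) := by
    simp only [Algebra.smul_def, map_ofNat]
    ring
  have key : (6 : K) • h (x ^ 2 * y) + (2 : K) • h (y ^ 3)
      = (6 : K) • ((h x) ^ 2 * h y) + (2 : K) • ((h y) ^ 3) := by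
    rw [← map_smul, ← map_smul, ← map_add, ← expand, map_sub, e1, e2, map_add, map_sub,
      expandB]
  rw [e3] at key
  have key2 : (6 : K) • h (x ^ 2 * y) = (6 : K) • ((h x) ^ 2 * h y) := by
    exact add_right_cancel key
  have h6 : (6 : K) ≠ 0 := by norm_num
  exact smul_right_injective B h6 key2
end

section
/- Let A and B be commutative ℚ-algebras, n ≥ 2, and h : A → B an n-Jordan homomorphism. Then for all x ∈ A and all natural numbers m ≥ 1, h(x^(1+m(n-1))) = h(x)^(1+m(n-1)). -/
open Finset Polynomial

lemma polyVanish {M : Type*} [AddCommGroup M] [Module ℚ M] (N : ℕ) (v : ℕ → M)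
    (hv : ∀ t : ℚ, ∑ k ∈ Finset.range N, t ^ k • v k = 0) : ∀ k < N, v k = 0 := by
  intro k hk
  rw [← Module.forall_dual_apply_eq_zero_iff ℚ]
  intro φ
  set p : Polynomial ℚ := ∑ j ∈ Finset.range N, Polynomial.C (φ (v j)) * Polynomial.X ^ j with hp
  have hpz : p = 0 := by
    apply Polynomial.funext
    intro t
    have h1 : p.eval t = φ (∑ j ∈ Finset.range N, t ^ j • v j) := by
      rw [map_sum, hp, Polynomial.eval_finset_sum]
      refine Finset.sum_congr rfl fun j _ => ?_
      rw [map_smul, smul_eq_mul, Polynomial.eval_mul, Polynomial.eval_C,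
        Polynomial.eval_pow, Polynomial.eval_X, mul_comm]
    rw [h1, hv, map_zero, Polynomial.eval_zero]
  have h2 := congrArg (fun q => Polynomial.coeff q k) hpz
  simpa [hp, Polynomial.finset_sum_coeff, Polynomial.coeff_X_pow,
    Finset.sum_ite_eq', hk] using h2

lemma partial_mul {A B : Type*} [CommRing A] [CommRing B] [Algebra ℚ A] [Algebra ℚ B]
    (n : ℕ) (hn : 2 ≤ n) (h : A →ₗ[ℚ] B) (hJ : ∀ a : A, h (a ^ n) = (h a) ^ n)
    (a b : A) : h (b * a ^ (n - 1)) = h b * (h a) ^ (n - 1) := by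
  set v : ℕ → B := fun k =>
    (n.choose k : ℚ) • (h (b ^ k * a ^ (n - k)) - (h b) ^ k * (h a) ^ (n - k)) with hv
  have key : ∀ t : ℚ, ∑ k ∈ Finset.range (n + 1), t ^ k • v k = 0 := by
    intro t
    have hJt := hJ (t • b + a)
    have lhs : h ((t • b + a) ^ n)
        = ∑ k ∈ Finset.range (n + 1), t ^ k • ((n.choose k : ℚ) • h (b ^ k * a ^ (n - k))) := by
      rw [add_pow, map_sum]
      refine Finset.sum_congr rfl fun k _ => ?_
      rw [_root_.smul_pow]
      have : t ^ k • b ^ k * a ^ (n - k) * (n.choose k : A)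
          = (t ^ k * (n.choose k : ℚ)) • (b ^ k * a ^ (n - k)) := by
        rw [smul_mul_assoc, mul_comm _ ((n.choose k : A))]
        rw [← nsmul_eq_mul, ← Nat.cast_smul_eq_nsmul ℚ, smul_smul, mul_comm (n.choose k : ℚ)]
      rw [this, map_smul, mul_smul]
    have rhs : (t • h b + h a) ^ n
        = ∑ k ∈ Finset.range (n + 1), t ^ k • ((n.choose k : ℚ) • ((h b) ^ k * (h a) ^ (n - k))) := by
      rw [add_pow]
      refine Finset.sum_congr rfl fun k _ => ?_
      rw [_root_.smul_pow, smul_mul_assoc, mul_comm _ ((n.choose k : B)),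
        ← nsmul_eq_mul, ← Nat.cast_smul_eq_nsmul ℚ, smul_smul, mul_comm (n.choose k : ℚ),
        mul_smul]
    have : h ((t • b + a) ^ n) = (t • h b + h a) ^ n := by
      rw [hJt]; simp
    rw [lhs, rhs] at this
    simp only [hv, smul_sub, Finset.sum_sub_distrib, sub_eq_zero]
    simpa [mul_smul] using this
  have h1 : v 1 = 0 := polyVanish (n + 1) v key 1 (by omega)
  rw [hv] at h1
  simp only [pow_one, Nat.choose_one_right] at h1
  have hne : (n : ℚ) ≠ 0 := by exact_mod_cast (by omega : n ≠ 0)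
  have := smul_eq_zero.mp h1
  rcases this with h' | h'
  · exact absurd h' hne
  · exact sub_eq_zero.mp h'

theorem stmt_15 {A B : Type*} [CommRing A] [CommRing B] [Algebra ℚ A] [Algebra ℚ B]
    (n : ℕ) (hn : 2 ≤ n) (h : A →ₗ[ℚ] B) (hJ : ∀ a : A, h (a ^ n) = (h a) ^ n) :
    ∀ x : A, ∀ m : ℕ, 1 ≤ m →
      h (x ^ (1 + m * (n - 1))) = (h x) ^ (1 + m * (n - 1)) := by
  intro x m hm
  induction m, hm using Nat.le_induction with
  | base =>
      have : 1 + 1 * (n - 1) = n := by omega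
      rw [this]; exact hJ x
  | succ m hm ih =>
      have he : 1 + (m + 1) * (n - 1) = (1 + m * (n - 1)) + (n - 1) := by ring
      have key := partial_mul n hn h hJ x (x ^ (1 + m * (n - 1)))
      rw [← pow_add] at key
      rw [he, key, ih, ← pow_add]
end

section
/- Let A and B be commutative ℚ-algebras, n ≥ 2, and h : A → B an n-Jordan homomorphism that is surjective. If A has a multiplicative identity 1_A, then h(1_A) is an idempotent-like element satisfying h(1_A)^(n-1)·b = b for all b ∈ B. -/
private lemma coeffs_zero {B : Type*} [AddCommGroup B] [Module ℚ B] :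
    ∀ (m : ℕ) (c : ℕ → B),
      (∀ q : ℚ, ∑ k ∈ Finset.range (m + 1), q ^ k • c k = 0) →
      ∀ k ≤ m, c k = 0 := by
  intro m
  induction m with
  | zero =>
    intro c hf k hk
    interval_cases k
    have := hf 1
    simpa using this
  | succ m ih =>
    intro c hf k hk
    set c' : ℕ → B := fun k => ((2 : ℚ) ^ k - 2 ^ (m + 1)) • c k with hc'
    have hf' : ∀ q : ℚ, ∑ k ∈ Finset.range (m + 1), q ^ k • c' k = 0 := by
      intro q
      have e : ∑ k ∈ Finset.range (m + 2), q ^ k • c' k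
          = ∑ k ∈ Finset.range (m + 1), q ^ k • c' k := by
        rw [Finset.sum_range_succ]
        simp [hc']
      rw [← e]
      have e2 : ∀ k ∈ Finset.range (m + 2),
          q ^ k • c' k = (2 * q) ^ k • c k - (2 : ℚ) ^ (m + 1) • q ^ k • c k := by
        intro k _
        simp only [hc', mul_pow, smul_smul, sub_smul, smul_sub]
        module
      rw [Finset.sum_congr rfl e2, Finset.sum_sub_distrib, ← Finset.smul_sum,
        hf (2 * q), hf q]
      simp
    have hz : ∀ k ≤ m, c k = 0 := by
      intro k hk2
      have := ih c' hf' k hk2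
      have hne : ((2 : ℚ) ^ k - 2 ^ (m + 1)) ≠ 0 := by
        have : (2 : ℚ) ^ k < 2 ^ (m + 1) :=
          pow_lt_pow_right₀ one_lt_two (Nat.lt_succ_of_le hk2)
        exact sub_ne_zero.mpr (ne_of_lt this)
      simpa [hc', smul_eq_zero, hne] using this
    rcases Nat.lt_succ_iff_lt_or_eq.mp (Nat.lt_succ_of_le hk) with h1 | h1
    · exact hz k (Nat.lt_succ_iff.mp h1)
    · subst h1
      have := hf 1
      rw [Finset.sum_range_succ] at this
      have hrest : ∑ k ∈ Finset.range (m + 1), (1 : ℚ) ^ k • c k = 0 := by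
        apply Finset.sum_eq_zero
        intro k hk3
        rw [hz k (Finset.mem_range_succ_iff.mp hk3)]
        simp
      rw [hrest] at this
      simpa using this

theorem stmt_16 {A B : Type*} [CommRing A] [CommRing B] [Algebra ℚ A] [Algebra ℚ B]
    (n : ℕ) (hn : 2 ≤ n) (h : A →ₗ[ℚ] B) (hJ : ∀ a : A, h (a ^ n) = (h a) ^ n)
    (hsurj : Function.Surjective h) :
    ∀ b : B, (h 1) ^ (n - 1) * b = b := by
  intro b
  obtain ⟨a, ha⟩ := hsurj b
  set c : ℕ → B := fun k =>
    (n.choose k : ℚ) • (h (a ^ (n - k)) - (h 1) ^ k * (h a) ^ (n - k)) with hc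
  have key : ∀ q : ℚ, ∑ k ∈ Finset.range (n + 1), q ^ k • c k = 0 := by
    intro q
    have e1 : h ((q • (1 : A) + a) ^ n)
        = ∑ k ∈ Finset.range (n + 1), q ^ k • ((n.choose k : ℚ) • h (a ^ (n - k))) := by
      rw [add_pow, map_sum]
      refine Finset.sum_congr rfl fun k _ => ?_
      have : (q • (1 : A)) ^ k * a ^ (n - k) * (n.choose k : A)
          = q ^ k • ((n.choose k : ℚ) • a ^ (n - k)) := by
        rw [smul_pow, one_pow, smul_mul_assoc, smul_mul_assoc, one_mul]
        congr 1
        rw [mul_comm, ← nsmul_eq_mul, ← Nat.cast_smul_eq_nsmul ℚ]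
      rw [this, map_smul, map_smul]
    have e2 : (q • h 1 + h a) ^ n
        = ∑ k ∈ Finset.range (n + 1),
            q ^ k • ((n.choose k : ℚ) • ((h 1) ^ k * (h a) ^ (n - k))) := by
      rw [add_pow]
      refine Finset.sum_congr rfl fun k _ => ?_
      rw [smul_pow, smul_mul_assoc, smul_mul_assoc]
      congr 1
      rw [mul_comm, ← nsmul_eq_mul, ← Nat.cast_smul_eq_nsmul ℚ]
    have hsum : ∑ k ∈ Finset.range (n + 1), q ^ k • c k
        = h ((q • (1 : A) + a) ^ n) - (q • h 1 + h a) ^ n := by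
      rw [e1, e2, ← Finset.sum_sub_distrib]
      refine Finset.sum_congr rfl fun k _ => ?_
      simp only [hc, smul_sub]
    rw [hsum, hJ, map_add, map_smul]
    ring
  have hc1 : c (n - 1) = 0 := coeffs_zero n c key (n - 1) (Nat.sub_le n 1)
  have h1n : 1 ≤ n := le_trans one_le_two hn
  have hnn : n - (n - 1) = 1 := by omega
  have hch : n.choose (n - 1) = n := by
    rw [Nat.choose_symm h1n, Nat.choose_one_right]
  simp only [hc, hnn, hch, pow_one] at hc1
  rw [smul_eq_zero] at hc1
  rcases hc1 with h0 | h0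
  · exfalso
    have : (n : ℚ) ≠ 0 := Nat.cast_ne_zero.mpr (by omega)
    exact this h0
  · rw [← ha]
    linear_combination -h0
end

section
/- Let A and B be commutative ℚ-algebras and h : A → B a 4-Jordan homomorphism. Then h(x²y²) = h(x)²h(y)² for all x, y ∈ A. -/
theorem stmt_17 {A B : Type*} [CommRing A] [CommRing B] [Algebra ℚ A] [Algebra ℚ B]
    (h : A →ₗ[ℚ] B) (hJ : ∀ a : A, h (a ^ 4) = (h a) ^ 4) :
    ∀ x y : A, h (x ^ 2 * y ^ 2) = (h x) ^ 2 * (h y) ^ 2 := by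
  intro x y
  have key : ∀ q : ℚ, h (x ^ 4) + algebraMap ℚ B (4 * q) * h (x ^ 3 * y)
      + algebraMap ℚ B (6 * q ^ 2) * h (x ^ 2 * y ^ 2)
      + algebraMap ℚ B (4 * q ^ 3) * h (x * y ^ 3)
      + algebraMap ℚ B (q ^ 4) * h (y ^ 4)
      = (h x + algebraMap ℚ B q * h y) ^ 4 := by
    intro q
    have h1 : (x + q • y) ^ 4 = x ^ 4 + (4 * q) • (x ^ 3 * y) + (6 * q ^ 2) • (x ^ 2 * y ^ 2)
        + (4 * q ^ 3) • (x * y ^ 3) + (q ^ 4) • (y ^ 4) := by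
      simp only [Algebra.smul_def, map_mul, map_pow, map_ofNat]
      ring
    have h2 : h ((x + q • y) ^ 4) = (h (x + q • y)) ^ 4 := hJ _
    rw [h1] at h2
    simp only [map_add, map_smul] at h2
    simp only [Algebra.smul_def] at h2
    rw [h2]
  have k1 := key 1
  have k2 := key (-1)
  simp only [map_mul, map_one, map_pow, map_neg, map_ofNat] at k1 k2
  have h12 : (12 : ℚ) • h (x ^ 2 * y ^ 2) = (12 : ℚ) • ((h x) ^ 2 * (h y) ^ 2) := by
    rw [Algebra.smul_def, Algebra.smul_def, map_ofNat]
    linear_combination k1 + k2 - 2 * hJ x - 2 * hJ y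
  have := congrArg (fun z => (12⁻¹ : ℚ) • z) h12
  simpa [smul_smul] using this
end

section
/- Let A and B be commutative ℚ-algebras and let h : A → B be a linear map such that h(aⁿ) = h(a)ⁿ for all a ∈ A, where n ≥ 2. Then h is an m·(n−1)+1-Jordan homomorphism for every m ≥ 1, i.e., h(a^(m(n−1)+1)) = h(a)^(m(n−1)+1) for all a ∈ A. -/
open Polynomial Finset

lemma aux_coeff_zero {B : Type*} [AddCommGroup B] [Module ℚ B] (d : ℕ) (c : ℕ → B)
    (H : ∀ t : ℚ, ∑ k ∈ Finset.range (d + 1), t ^ k • c k = 0) :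
    ∀ k < d + 1, c k = 0 := by
  intro k hk
  rw [← Module.forall_dual_apply_eq_zero_iff ℚ]
  intro φ
  set p : ℚ[X] := ∑ j ∈ Finset.range (d + 1), Polynomial.C (φ (c j)) * Polynomial.X ^ j with hp
  have hev : ∀ t : ℚ, p.eval t = 0 := by
    intro t
    have h1 : φ (∑ j ∈ Finset.range (d + 1), t ^ j • c j)
        = ∑ j ∈ Finset.range (d + 1), φ (c j) * t ^ j := by
      rw [map_sum]
      exact Finset.sum_congr rfl fun j _ => by rw [map_smul, smul_eq_mul, mul_comm]
    rw [hp, Polynomial.eval_finset_sum]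
    simp only [Polynomial.eval_mul, Polynomial.eval_C, Polynomial.eval_pow, Polynomial.eval_X]
    rw [← h1, H t, map_zero]
  have hp0 : p = 0 := Polynomial.funext fun t => by simp [hev t]
  have := congrArg (fun q => Polynomial.coeff q k) hp0
  simpa [hp, Polynomial.finset_sum_coeff, Polynomial.coeff_C_mul, Polynomial.coeff_X_pow,
    Finset.mem_range.mpr hk] using this

lemma aux_mul {A B : Type*} [CommRing A] [CommRing B] [Algebra ℚ A] [Algebra ℚ B]
    (n : ℕ) (hn : 2 ≤ n) (h : A →ₗ[ℚ] B) (hJ : ∀ a : A, h (a ^ n) = (h a) ^ n)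
    (x y : A) : h (x * y ^ (n - 1)) = h x * (h y) ^ (n - 1) := by
  set c : ℕ → B := fun k =>
    h (y ^ k * x ^ (n - k) * (n.choose k : A)) - (h y) ^ k * (h x) ^ (n - k) * (n.choose k : B)
    with hc
  have H : ∀ t : ℚ, ∑ k ∈ Finset.range (n + 1), t ^ k • c k = 0 := by
    intro t
    have e1 : h ((t • y + x) ^ n)
        = ∑ k ∈ Finset.range (n + 1), t ^ k • h (y ^ k * x ^ (n - k) * (n.choose k : A)) := by
      rw [add_pow, map_sum]
      exact Finset.sum_congr rfl fun k _ => by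
        rw [_root_.smul_pow, smul_mul_assoc, smul_mul_assoc, map_smul]
    have e2 : (t • h y + h x) ^ n
        = ∑ k ∈ Finset.range (n + 1), t ^ k • ((h y) ^ k * (h x) ^ (n - k) * (n.choose k : B)) := by
      rw [add_pow]
      exact Finset.sum_congr rfl fun k _ => by
        rw [_root_.smul_pow, smul_mul_assoc, smul_mul_assoc]
    have e3 : h ((t • y + x) ^ n) = (t • h y + h x) ^ n := by
      rw [hJ, map_add, map_smul]
    calc ∑ k ∈ Finset.range (n + 1), t ^ k • c k
        = (∑ k ∈ Finset.range (n + 1), t ^ k • h (y ^ k * x ^ (n - k) * (n.choose k : A)))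
          - ∑ k ∈ Finset.range (n + 1), t ^ k • ((h y) ^ k * (h x) ^ (n - k) * (n.choose k : B)) := by
          rw [← Finset.sum_sub_distrib]
          exact Finset.sum_congr rfl fun k _ => by rw [hc, smul_sub]
      _ = 0 := by rw [← e1, ← e2, e3, sub_self]
  have hcn : c (n - 1) = 0 := aux_coeff_zero n c H (n - 1) (by omega)
  have h1 : n - (n - 1) = 1 := by omega
  have h2 : n.choose (n - 1) = n := by
    rw [Nat.choose_symm (by omega), Nat.choose_one_right]
  rw [hc] at hcn
  simp only [h1, h2, pow_one, sub_eq_zero] at hcn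
  have key : (n : ℚ) • h (y ^ (n - 1) * x) = (n : ℚ) • ((h y) ^ (n - 1) * h x) := by
    have l : y ^ (n - 1) * x * (n : A) = (n : ℚ) • (y ^ (n - 1) * x) := by
      rw [Nat.cast_smul_eq_nsmul, nsmul_eq_mul, mul_comm]
    have r : (h y) ^ (n - 1) * h x * (n : B) = (n : ℚ) • ((h y) ^ (n - 1) * h x) := by
      rw [Nat.cast_smul_eq_nsmul, nsmul_eq_mul, mul_comm]
    rw [← map_smul, ← l, hcn, r]
  have := smul_right_injective B (by exact_mod_cast (by omega : n ≠ 0) : (n : ℚ) ≠ 0) key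
  rw [mul_comm x, mul_comm (h x)]
  exact this

theorem stmt_19 {A B : Type*} [CommRing A] [CommRing B] [Algebra ℚ A] [Algebra ℚ B]
    (n : ℕ) (hn : 2 ≤ n) (h : A →ₗ[ℚ] B) (hJ : ∀ a : A, h (a ^ n) = (h a) ^ n) :
    ∀ m : ℕ, 1 ≤ m → ∀ a : A,
      h (a ^ (m * (n - 1) + 1)) = (h a) ^ (m * (n - 1) + 1) := by
  intro m
  induction m with
  | zero => omega
  | succ m ih =>
    intro _ a
    rcases Nat.eq_zero_or_pos m with hm | hm
    · subst hm
      have : 1 * (n - 1) + 1 = n := by omega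
      rw [this]
      exact hJ a
    · have e : (m + 1) * (n - 1) + 1 = (m * (n - 1) + 1) + (n - 1) := by ring
      rw [e, pow_add, aux_mul n hn h hJ (a ^ (m * (n - 1) + 1)) a, ih hm a, ← pow_add]
end
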